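/- (Refined right-tail sub-Gaussianity of Bernoulli random variables.) For every μ ∈ [1/2, 1] and every λ ≥ 0, μ·exp(λ·(1−μ)) + (1−μ)·exp(−λ·μ) ≤ exp((λ²/2)·μ·(1−μ)). Equivalently, if X is a Bernoulli random variable with mean μ ∈ [1/2,1], then log E[exp(λ·(X − μ))] ≤ (λ²/2)·μ·(1−μ) for all λ ≥ 0. -/

import Mathlib

/-
The log-moment generating function `ψ(t) = log (μ eᵗ + 1 - μ) - t μ` of the centered Bernoulli
variable vanishes at `0`, so it suffices to compare derivatives on `t ≥ 0`:
`ψ'(t) = μ (1 - μ) (eᵗ - 1) / (μ eᵗ + 1 - μ) ≤ t μ (1 - μ)`, i.e. `eᵗ - 1 ≤ t (μ eᵗ + 1 - μ)`.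
For `μ ≥ 1/2` the right-hand side is at least `t (eᵗ + 1) / 2`, and `eᵗ - 1 ≤ t (eᵗ + 1) / 2`
is `tanh (t / 2) ≤ t / 2`.
-/

open Real Set

lemma apply_zero_le_of_hasDerivAt_nonneg {f f' : ℝ → ℝ} (hf : ∀ t, HasDerivAt f (f' t) t)
    (hf' : ∀ t, 0 < t → 0 ≤ f' t) {x : ℝ} (hx : 0 ≤ x) : f 0 ≤ f x := by
  refine monotoneOn_of_hasDerivWithinAt_nonneg (convex_Ici 0)
    (fun t _ ↦ (hf t).continuousAt.continuousWithinAt)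
    (fun t _ ↦ (hf t).hasDerivWithinAt) ?_ self_mem_Ici hx hx
  rw [interior_Ici]
  exact hf'

lemma Real.two_mul_exp_sub_one_le {x : ℝ} (hx : 0 ≤ x) : 2 * (exp x - 1) ≤ x * (exp x + 1) := by
  have hderiv (t : ℝ) : HasDerivAt (fun t ↦ t * (exp t + 1) - 2 * (exp t - 1))
      (1 - (1 - t) * exp t) t := by
    refine (((hasDerivAt_id t).fun_mul ((hasDerivAt_exp t).add_const 1)).fun_sub
      (((hasDerivAt_exp t).sub_const 1).const_mul 2)).congr_deriv ?_
    simp only [id]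
    ring
  have hmono := apply_zero_le_of_hasDerivAt_nonneg hderiv (fun t _ ↦ ?_) hx
  · simp only [exp_zero] at hmono
    linarith
  · have h := mul_le_mul_of_nonneg_right (add_one_le_exp (-t)) (exp_pos t).le
    rw [← exp_add, neg_add_cancel, exp_zero] at h
    linarith

lemma bernoulli_mgf_pos {μ : ℝ} (h₀ : 0 ≤ μ) (h₁ : μ ≤ 1) (t : ℝ) : 0 < μ * exp t + (1 - μ) := by
  rcases h₁.lt_or_eq with h₁ | rfl
  · have := exp_pos t
    positivity
  · simpa using exp_pos t

lemma exp_sub_one_le_mul_bernoulli_mgf {μ t : ℝ} (hμ : 1 / 2 ≤ μ) (ht : 0 ≤ t) :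
    exp t - 1 ≤ t * (μ * exp t + (1 - μ)) := by
  have h := two_mul_exp_sub_one_le ht
  have : 0 ≤ t * ((μ - 1 / 2) * (exp t - 1)) :=
    mul_nonneg ht (mul_nonneg (by linarith) (by linarith [one_le_exp ht]))
  nlinarith

noncomputable def centeredBernoulliCGF (μ t : ℝ) : ℝ := log (μ * exp t + (1 - μ)) - t * μ

lemma exp_centeredBernoulliCGF {μ : ℝ} (h₀ : 0 ≤ μ) (h₁ : μ ≤ 1) (t : ℝ) :
    exp (centeredBernoulliCGF μ t) = μ * exp (t * (1 - μ)) + (1 - μ) * exp (-t * μ) := by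
  rw [centeredBernoulliCGF, exp_sub, exp_log (bernoulli_mgf_pos h₀ h₁ t),
    show t * (1 - μ) = t - t * μ by ring, neg_mul, exp_sub, exp_neg]
  field_simp

lemma hasDerivAt_centeredBernoulliCGF {μ : ℝ} (h₀ : 0 ≤ μ) (h₁ : μ ≤ 1) (t : ℝ) :
    HasDerivAt (centeredBernoulliCGF μ) (μ * exp t / (μ * exp t + (1 - μ)) - μ) t :=
  (((hasDerivAt_exp t).const_mul μ).add_const (1 - μ)).log
    (bernoulli_mgf_pos h₀ h₁ t).ne' |>.fun_sub (hasDerivAt_mul_const μ)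

lemma deriv_centeredBernoulliCGF_le {μ t : ℝ} (h₀ : 1 / 2 ≤ μ) (h₁ : μ ≤ 1) (ht : 0 ≤ t) :
    deriv (centeredBernoulliCGF μ) t ≤ t * (μ * (1 - μ)) := by
  have hD := bernoulli_mgf_pos (by linarith) h₁ t
  have hσ : 0 ≤ μ * (1 - μ) := mul_nonneg (by linarith) (by linarith)
  rw [(hasDerivAt_centeredBernoulliCGF (by linarith) h₁ t).deriv, sub_le_iff_le_add,
    div_le_iff₀ hD]
  calc μ * exp t
      = μ * (μ * exp t + (1 - μ)) + μ * (1 - μ) * (exp t - 1) := by ring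
    _ ≤ μ * (μ * exp t + (1 - μ)) + μ * (1 - μ) * (t * (μ * exp t + (1 - μ))) := by
      gcongr
      exact exp_sub_one_le_mul_bernoulli_mgf h₀ ht
    _ = (t * (μ * (1 - μ)) + μ) * (μ * exp t + (1 - μ)) := by ring

lemma centeredBernoulliCGF_le {μ t : ℝ} (h₀ : 1 / 2 ≤ μ) (h₁ : μ ≤ 1) (ht : 0 ≤ t) :
    centeredBernoulliCGF μ t ≤ t ^ 2 / 2 * (μ * (1 - μ)) := by
  have hderiv (s : ℝ) : HasDerivAt (fun s ↦ s ^ 2 / 2 * (μ * (1 - μ)) - centeredBernoulliCGF μ s)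
      (s * (μ * (1 - μ)) - deriv (centeredBernoulliCGF μ) s) s := by
    have hcgf := (hasDerivAt_centeredBernoulliCGF (by linarith) h₁ s).differentiableAt
    refine ((((hasDerivAt_pow 2 s).div_const 2).mul_const (μ * (1 - μ))).fun_sub
      hcgf.hasDerivAt).congr_deriv ?_
    norm_num
  have := apply_zero_le_of_hasDerivAt_nonneg hderiv
    (fun s hs ↦ sub_nonneg.2 (deriv_centeredBernoulliCGF_le h₀ h₁ hs.le)) ht
  simpa [centeredBernoulliCGF] using this

/-- Refined right-tail sub-Gaussianity of Bernoulli random variables: for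
`μ ∈ [1/2, 1]` and `λ ≥ 0`, the moment generating function of a centered
Bernoulli random variable with parameter `μ` is bounded by
`exp(λ²/2 · μ(1−μ))`. -/
theorem bernoulli_right_tail_subgaussian (μ : ℝ) (hμ : μ ∈ Set.Icc (1/2 : ℝ) 1)
    (lam : ℝ) (hlam : 0 ≤ lam) :
    μ * Real.exp (lam * (1 - μ)) + (1 - μ) * Real.exp (-lam * μ)
      ≤ Real.exp (lam ^ 2 / 2 * (μ * (1 - μ))) := by
  rw [← exp_centeredBernoulliCGF (by linarith [hμ.1]) hμ.2]
  exact exp_le_exp.2 (centeredBernoulliCGF_le hμ.1 hμ.2 hlam)
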